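/- For 1 < q < 3 and all real x, the q-Gaussian density satisfies g_q(x) = ∫₀^∞ (1/(√(2π) v)) exp(-x²/(2v²)) f_V(v) dv, where f_V(v) = C_{V,q} exp(-1/(2(q-1)v²)) v^{-2/(q-1)} on (0,∞), with C_{V,q}^{-1} = Γ((3-q)/(2(q-1))) · (1/2) · (2(q-1))^{(3-q)/(2(q-1))}. -/

import Mathlib

open Real MeasureTheory

/-- The q-Gaussian density for `1 < q < 3` is a variance mixture of normal densities with
mixing density `f_V(v) = C_{V,q} exp(-1/(2(q-1)v²)) v^{-2/(q-1)}`. -/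
theorem qGaussian_eq_varianceMixture (q : ℝ) (hq1 : 1 < q) (hq3 : q < 3) (x : ℝ) :
    (Real.sqrt (q - 1) * Real.Gamma (1 / (q - 1)) /
        (Real.sqrt π * Real.Gamma ((3 - q) / (2 * (q - 1))))) *
      (1 + (q - 1) * x ^ 2) ^ (-(1 / (q - 1)))
      = ∫ v in Set.Ioi (0 : ℝ),
          (1 / (Real.sqrt (2 * π) * v)) * Real.exp (-x ^ 2 / (2 * v ^ 2)) *
            ((Real.Gamma ((3 - q) / (2 * (q - 1))) * (1 / 2) *
                (2 * (q - 1)) ^ ((3 - q) / (2 * (q - 1))))⁻¹ *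
              Real.exp (-1 / (2 * (q - 1) * v ^ 2)) * v ^ (-(2 / (q - 1)))) := by
  have hq : (0:ℝ) < q - 1 := by linarith
  have hqne : q - 1 ≠ 0 := hq.ne'
  set r : ℝ := 1 / (q - 1) with hr
  set s : ℝ := (3 - q) / (2 * (q - 1)) with hs
  have hrpos : 0 < r := by positivity
  set P : ℝ := 1 + (q - 1) * x ^ 2 with hPdef
  have hP : (0:ℝ) < P := by positivity
  set c : ℝ := P / (q - 1) / 2 with hc
  have hcpos : 0 < c := by positivity
  set K : ℝ := (Real.Gamma s * (1/2) * (2*(q-1)) ^ s)⁻¹ / Real.sqrt (2*π) with hK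
  have hsub := MeasureTheory.integral_comp_rpow_Ioi
    (fun t : ℝ => (K/2) * (t ^ (r-1) * Real.exp (-(c * t)))) (p := -2) (by norm_num)
  have hpt : ∀ v ∈ Set.Ioi (0:ℝ),
      (1 / (Real.sqrt (2 * π) * v)) * Real.exp (-x ^ 2 / (2 * v ^ 2)) *
            ((Real.Gamma s * (1 / 2) * (2 * (q - 1)) ^ s)⁻¹ *
              Real.exp (-1 / (2 * (q - 1) * v ^ 2)) * v ^ (-(2 / (q - 1))))
      = (|(-2:ℝ)| * v ^ ((-2:ℝ) - 1)) •
          ((fun t : ℝ => (K/2) * (t ^ (r-1) * Real.exp (-(c * t)))) (v ^ (-2:ℝ))) := by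
    intro v hv
    have hv0 : (0:ℝ) < v := hv
    have hvne : v ≠ 0 := hv0.ne'
    simp only [smul_eq_mul]
    have habs : |(-2:ℝ)| = 2 := by norm_num
    have hexp : Real.exp (-x ^ 2 / (2 * v ^ 2)) * Real.exp (-1 / (2 * (q - 1) * v ^ 2))
        = Real.exp (-(c * v ^ (-2:ℝ))) := by
      rw [← Real.exp_add]
      congr 1
      rw [show v ^ (-2:ℝ) = (v^2)⁻¹ from by
        rw [← Real.rpow_natCast v 2, ← Real.rpow_neg hv0.le]; norm_num, hc, hPdef]
      field_simp
      ring
    have hpow : (v ^ (-2:ℝ)) ^ (r - 1) = v ^ ((-2:ℝ) * (r - 1)) :=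
      (Real.rpow_mul hv0.le (-2) (r-1)).symm
    have hcomb : v ^ ((-2:ℝ) - 1) * v ^ ((-2:ℝ) * (r - 1)) = v⁻¹ * v ^ (-(2/(q-1))) := by
      rw [← Real.rpow_add hv0, ← Real.rpow_neg_one v, ← Real.rpow_add hv0]
      congr 1
      rw [hr]
      field_simp
      ring
    rw [hpow, ← hexp, habs, hK]
    linear_combination -((Real.Gamma s * (1/2) * (2*(q-1)) ^ s)⁻¹ / Real.sqrt (2*π) *
      (Real.exp (-x ^ 2 / (2 * v ^ 2)) * Real.exp (-1 / (2 * (q - 1) * v ^ 2)))) * hcomb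
  rw [setIntegral_congr_fun measurableSet_Ioi hpt, hsub]
  rw [MeasureTheory.integral_const_mul, integral_rpow_mul_exp_neg_mul_Ioi hrpos hcpos]
  have h1c : 1 / c = 2 * (q - 1) / P := by
    rw [hc]; field_simp
  have hGs : 0 < Real.Gamma s := Real.Gamma_pos_of_pos (by
    rw [hs]; exact div_pos (by linarith) (by linarith))
  have hrs : r - s = 1/2 := by
    rw [hr, hs]; field_simp; ring
  have hBpow : (2*(q-1)) ^ r = (2*(q-1)) ^ s * (Real.sqrt 2 * Real.sqrt (q-1)) := by
    have h : (2*(q-1)) ^ r = (2*(q-1)) ^ (s + 1/2) := by rw [← hrs]; ring_nf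
    rw [h, Real.rpow_add (by positivity)]
    congr 1
    rw [← Real.sqrt_mul (by norm_num) (q-1), Real.sqrt_eq_rpow]
  rw [h1c, Real.div_rpow (by positivity) hP.le]
  rw [hK, Real.sqrt_mul (by norm_num) π, hBpow]
  rw [Real.rpow_neg hP.le]
  have hGr : 0 < Real.Gamma r := Real.Gamma_pos_of_pos hrpos
  have h2 : (0:ℝ) < Real.sqrt 2 := by positivity
  have hpi : (0:ℝ) < Real.sqrt π := Real.sqrt_pos.mpr Real.pi_pos
  have hB : (0:ℝ) < (2*(q-1)) ^ s := by positivity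
  have hPr : (0:ℝ) < P ^ r := by positivity
  field_simp
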